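/- arXiv:2211.12640 — 3 statements merged into one kernel-verified Lean document; each statement's English description precedes it below -/
import Mathlib

section
/- Let {ζ_r}_{r≥0} be a sequence of real numbers with 0 < ζ_r ≤ 1 for all r, and let p ≥ 1 be a real number. Then for all integers 0 ≤ s ≤ k, ∏_{r=s}^{k} (1 − ζ_r)^p ≤ 1 / (p · ∑_{r=s}^{k} ζ_r). -/
/-!
Since `1 - x ≤ exp (-x)`, the product is at most `exp (-(p * S))` with `S = ∑ ζ r`, and
`exp (-y) ≤ 1 / y` for `y > 0` because `exp y ≥ 1 + y > y`.
-/

open Finset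

namespace Real

lemma one_sub_rpow_le_exp_neg_mul {x p : ℝ} (hx : x ≤ 1) (hp : 0 ≤ p) :
    (1 - x) ^ p ≤ exp (-(p * x)) :=
  calc (1 - x) ^ p ≤ exp (-x) ^ p := rpow_le_rpow (by linarith) (one_sub_le_exp_neg x) hp
    _ = exp (-(p * x)) := by rw [← exp_mul]; ring_nf

lemma prod_one_sub_rpow_le_exp_neg_mul_sum {ι : Type*} (s : Finset ι) (f : ι → ℝ)
    (hf : ∀ i ∈ s, f i ≤ 1) {p : ℝ} (hp : 0 ≤ p) :
    ∏ i ∈ s, (1 - f i) ^ p ≤ exp (-(p * ∑ i ∈ s, f i)) := by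
  rw [mul_sum, ← sum_neg_distrib, exp_sum]
  exact prod_le_prod (fun i hi => rpow_nonneg (by linarith [hf i hi]) p)
    fun i hi => one_sub_rpow_le_exp_neg_mul (hf i hi) hp

lemma exp_neg_le_one_div {y : ℝ} (hy : 0 < y) : exp (-y) ≤ 1 / y := by
  rw [exp_neg, one_div]
  exact inv_anti₀ hy (by linarith [add_one_le_exp y])

end Real

theorem bernoulli_product_bound (ζ : ℕ → ℝ) (hζpos : ∀ r, 0 < ζ r) (hζle : ∀ r, ζ r ≤ 1)
    (p : ℝ) (hp : 1 ≤ p) (s k : ℕ) (hsk : s ≤ k) :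
    ∏ r ∈ Finset.Icc s k, (1 - ζ r) ^ p ≤ 1 / (p * ∑ r ∈ Finset.Icc s k, ζ r) := by
  have hsum : 0 < ∑ r ∈ Icc s k, ζ r :=
    sum_pos (fun r _ => hζpos r) ⟨s, mem_Icc.mpr ⟨le_rfl, hsk⟩⟩
  calc ∏ r ∈ Icc s k, (1 - ζ r) ^ p ≤ Real.exp (-(p * ∑ r ∈ Icc s k, ζ r)) :=
        Real.prod_one_sub_rpow_le_exp_neg_mul_sum _ ζ (fun r _ => hζle r) (by linarith)
    _ ≤ 1 / (p * ∑ r ∈ Icc s k, ζ r) := Real.exp_neg_le_one_div (mul_pos (by linarith) hsum)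
end

section
/- Let F_1, …, F_m : ℝⁿ → ℝ be differentiable functions whose gradients are L-Lipschitz, let F(w) = (1/m)∑_{i=1}^m F_i(w), and assume ‖∇F_i(w) − ∇F(w)‖ ≤ δ for all w ∈ ℝⁿ and all i. Then for any w_1, …, w_m ∈ ℝⁿ with w̄ = (1/m)∑_{i=1}^m w_i, ∑_{i=1}^m ‖∇F_i(w_i) − (1/m)∑_{j=1}^m ∇F_j(w_j)‖² ≤ 2mδ² + 8L² ∑_{i=1}^m ‖w_i − w̄‖². -/
/-!
The mean minimises the sum of squared distances, so the consensus error of the local gradients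
`∇F_i(w_i)` is at most their total squared distance to `∇F(w̄)`. Each such distance splits into a
Lipschitz part `∇F_i(w_i) - ∇F_i(w̄)` and a heterogeneity part `∇F_i(w̄) - ∇F(w̄)`, and
`‖a + b‖² ≤ 2‖a‖² + 2‖b‖²` gives `2L²‖w_i - w̄‖² + 2δ²` for each `i`.
-/

open Finset

theorem Finset.sum_sub_average_eq_zero {ι 𝕜 E : Type*} [Field 𝕜] [CharZero 𝕜] [AddCommGroup E]
    [Module 𝕜 E] (s : Finset ι) (x : ι → E) :
    ∑ i ∈ s, (x i - (1 / (#s : 𝕜)) • ∑ j ∈ s, x j) = 0 := by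
  rcases s.eq_empty_or_nonempty with rfl | hs
  · simp
  have hcard : (#s : 𝕜) ≠ 0 := by exact_mod_cast hs.card_pos.ne'
  rw [sum_sub_distrib, sum_const, ← Nat.cast_smul_eq_nsmul 𝕜, smul_smul, mul_one_div_cancel hcard,
    one_smul, sub_self]

theorem Finset.sum_norm_sub_average_sq_le {ι E : Type*} [NormedAddCommGroup E]
    [InnerProductSpace ℝ E] (s : Finset ι) (x : ι → E) (c : E) :
    ∑ i ∈ s, ‖x i - (1 / (#s : ℝ)) • ∑ j ∈ s, x j‖ ^ 2 ≤ ∑ i ∈ s, ‖x i - c‖ ^ 2 := by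
  set μ := (1 / (#s : ℝ)) • ∑ j ∈ s, x j
  have hsplit : ∀ i, ‖x i - c‖ ^ 2 =
      ‖x i - μ‖ ^ 2 + 2 * inner ℝ (x i - μ) (μ - c) + ‖μ - c‖ ^ 2 := fun i => by
    rw [← norm_add_sq_real, sub_add_sub_cancel]
  have hcross : ∑ i ∈ s, inner ℝ (x i - μ) (μ - c) = 0 := by
    rw [← sum_inner, s.sum_sub_average_eq_zero x, inner_zero_left]
  simp only [hsplit, sum_add_distrib, ← mul_sum, hcross, mul_zero, add_zero]
  exact le_add_of_nonneg_right (sum_nonneg fun _ _ => sq_nonneg _)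

theorem norm_add_sq_le_two_mul {E : Type*} [SeminormedAddCommGroup E] (x y : E) :
    ‖x + y‖ ^ 2 ≤ 2 * ‖x‖ ^ 2 + 2 * ‖y‖ ^ 2 :=
  calc ‖x + y‖ ^ 2 ≤ (‖x‖ + ‖y‖) ^ 2 := by gcongr; exact norm_add_le x y
    _ ≤ 2 * ‖x‖ ^ 2 + 2 * ‖y‖ ^ 2 := by linarith [add_sq_le (a := ‖x‖) (b := ‖y‖)]

theorem norm_sub_sq_le_of_lipschitz_of_norm_sub_le {α E : Type*} [SeminormedAddCommGroup α]
    [SeminormedAddCommGroup E] {f g : α → E} {L δ : ℝ}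
    (hf : ∀ x y, ‖f x - f y‖ ≤ L * ‖x - y‖) (hfg : ∀ x, ‖f x - g x‖ ≤ δ) (x y : α) :
    ‖f x - g y‖ ^ 2 ≤ 2 * L ^ 2 * ‖x - y‖ ^ 2 + 2 * δ ^ 2 :=
  calc ‖f x - g y‖ ^ 2 = ‖(f x - f y) + (f y - g y)‖ ^ 2 := by rw [sub_add_sub_cancel]
    _ ≤ 2 * ‖f x - f y‖ ^ 2 + 2 * ‖f y - g y‖ ^ 2 := norm_add_sq_le_two_mul _ _
    _ ≤ 2 * (L * ‖x - y‖) ^ 2 + 2 * δ ^ 2 := by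
        gcongr
        exacts [hf x y, hfg y]
    _ = 2 * L ^ 2 * ‖x - y‖ ^ 2 + 2 * δ ^ 2 := by ring

theorem gradient_consensus_error_bound_general (n m : ℕ)
    (F : Fin m → EuclideanSpace ℝ (Fin n) → ℝ) (L δ : ℝ)
    (hLip : ∀ i (w w' : EuclideanSpace ℝ (Fin n)),
      ‖gradient (F i) w - gradient (F i) w'‖ ≤ L * ‖w - w'‖)
    (hhet : ∀ i (w : EuclideanSpace ℝ (Fin n)),
      ‖gradient (F i) w - gradient (fun v => (1 / (m : ℝ)) * ∑ j, F j v) w‖ ≤ δ)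
    (w : Fin m → EuclideanSpace ℝ (Fin n)) :
    ∑ i, ‖gradient (F i) (w i) - (1 / (m : ℝ)) • ∑ j, gradient (F j) (w j)‖ ^ 2 ≤
      2 * m * δ ^ 2 +
        8 * L ^ 2 * ∑ i, ‖w i - (1 / (m : ℝ)) • ∑ j, w j‖ ^ 2 := by
  set wbar := (1 / (m : ℝ)) • ∑ j, w j
  set gradF := gradient (fun v => (1 / (m : ℝ)) * ∑ j, F j v)
  have hmean := sum_norm_sub_average_sq_le univ (fun i => gradient (F i) (w i)) (gradF wbar)
  rw [card_univ, Fintype.card_fin] at hmean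
  have hdev : 0 ≤ L ^ 2 * ∑ i, ‖w i - wbar‖ ^ 2 := by positivity
  calc ∑ i, ‖gradient (F i) (w i) - (1 / (m : ℝ)) • ∑ j, gradient (F j) (w j)‖ ^ 2
      ≤ ∑ i, ‖gradient (F i) (w i) - gradF wbar‖ ^ 2 := hmean
    _ ≤ ∑ i, (2 * L ^ 2 * ‖w i - wbar‖ ^ 2 + 2 * δ ^ 2) := by
        gcongr with i
        exact norm_sub_sq_le_of_lipschitz_of_norm_sub_le (hLip i) (hhet i) (w i) wbar
    _ = 2 * m * δ ^ 2 + 2 * (L ^ 2 * ∑ i, ‖w i - wbar‖ ^ 2) := by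
        simp only [sum_add_distrib, ← mul_sum, sum_const, card_univ, Fintype.card_fin,
          nsmul_eq_mul]
        ring
    _ ≤ 2 * m * δ ^ 2 + 8 * L ^ 2 * ∑ i, ‖w i - wbar‖ ^ 2 := by linarith

theorem gradient_consensus_error_bound (n m : ℕ) (hm : 0 < m)
    (F : Fin m → EuclideanSpace ℝ (Fin n) → ℝ) (L δ : ℝ)
    (hdiff : ∀ i, Differentiable ℝ (F i))
    (hLip : ∀ i (w w' : EuclideanSpace ℝ (Fin n)),
      ‖gradient (F i) w - gradient (F i) w'‖ ≤ L * ‖w - w'‖)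
    (hhet : ∀ i (w : EuclideanSpace ℝ (Fin n)),
      ‖gradient (F i) w - gradient (fun v => (1 / (m : ℝ)) * ∑ j, F j v) w‖ ≤ δ)
    (w : Fin m → EuclideanSpace ℝ (Fin n)) :
    ∑ i, ‖gradient (F i) (w i) - (1 / (m : ℝ)) • ∑ j, gradient (F j) (w j)‖ ^ 2 ≤
      2 * m * δ ^ 2 +
        8 * L ^ 2 * ∑ i, ‖w i - (1 / (m : ℝ)) • ∑ j, w j‖ ^ 2 :=
  gradient_consensus_error_bound_general n m F L δ hLip hhet w
end

section
/- Let F_1, …, F_m : ℝⁿ → ℝ be differentiable functions whose gradients are L-Lipschitz. Then for any w_1, …, w_m ∈ ℝⁿ with w̄ = (1/m)∑_{i=1}^m w_i, ∑_{i=1}^m ‖(1/m)∑_{j=1}^m ∇F_j(w_j) − (1/m)∑_{j=1}^m ∇F_j(w_i)‖² ≤ 4L² ∑_{i=1}^m ‖w_i − w̄‖². -/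
open Finset

theorem average_gradient_difference_bound (n m : ℕ) (hm : 0 < m)
    (F : Fin m → EuclideanSpace ℝ (Fin n) → ℝ) (L : ℝ)
    (hdiff : ∀ i, Differentiable ℝ (F i))
    (hLip : ∀ i (w w' : EuclideanSpace ℝ (Fin n)),
      ‖gradient (F i) w - gradient (F i) w'‖ ≤ L * ‖w - w'‖)
    (w : Fin m → EuclideanSpace ℝ (Fin n)) :
    ∑ i, ‖(1 / (m : ℝ)) • ∑ j, gradient (F j) (w j) -
        (1 / (m : ℝ)) • ∑ j, gradient (F j) (w i)‖ ^ 2 ≤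
      4 * L ^ 2 * ∑ i, ‖w i - (1 / (m : ℝ)) • ∑ j, w j‖ ^ 2 := by
  have hm' : (0:ℝ) < m := Nat.cast_pos.mpr hm
  set wb : EuclideanSpace ℝ (Fin n) := (1 / (m : ℝ)) • ∑ j, w j with hwb
  have key : ∀ i, ‖(1 / (m : ℝ)) • ∑ j, gradient (F j) (w j) -
        (1 / (m : ℝ)) • ∑ j, gradient (F j) (w i)‖ ^ 2 ≤
      (L ^ 2 / m) * ∑ j, ‖w j - w i‖ ^ 2 := by
    intro i
    have h1 : ‖(1 / (m : ℝ)) • ∑ j, gradient (F j) (w j) -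
        (1 / (m : ℝ)) • ∑ j, gradient (F j) (w i)‖
        ≤ (1 / m) * ∑ j, (L * ‖w j - w i‖) := by
      rw [← smul_sub, norm_smul, Real.norm_eq_abs, abs_of_pos (by positivity : (0:ℝ) < 1/m),
        ← Finset.sum_sub_distrib]
      refine mul_le_mul_of_nonneg_left ?_ (by positivity)
      exact (norm_sum_le _ _).trans (Finset.sum_le_sum fun j _ => hLip j (w j) (w i))
    have h2 := pow_le_pow_left₀ (norm_nonneg _) h1 2
    refine h2.trans ?_
    have h3 : (∑ j, (L * ‖w j - w i‖)) ^ 2 ≤ m * ∑ j, (L * ‖w j - w i‖) ^ 2 := by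
      have := sq_sum_le_card_mul_sum_sq (s := (univ : Finset (Fin m)))
        (f := fun j => L * ‖w j - w i‖)
      simpa using this
    have : ((1:ℝ)/m * ∑ j, (L * ‖w j - w i‖)) ^ 2
        = (1/m)^2 * (∑ j, (L * ‖w j - w i‖)) ^ 2 := by ring
    rw [this]
    calc (1/(m:ℝ))^2 * (∑ j, (L * ‖w j - w i‖)) ^ 2
        ≤ (1/m)^2 * (m * ∑ j, (L * ‖w j - w i‖) ^ 2) :=
          mul_le_mul_of_nonneg_left h3 (by positivity)
      _ = (L ^ 2 / m) * ∑ j, ‖w j - w i‖ ^ 2 := by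
          rw [Finset.mul_sum, Finset.mul_sum, Finset.mul_sum]
          refine Finset.sum_congr rfl fun j _ => ?_
          field_simp
  have pair : ∀ i j : Fin m, ‖w j - w i‖ ^ 2 ≤ 2 * ‖w j - wb‖ ^ 2 + 2 * ‖w i - wb‖ ^ 2 := by
    intro i j
    have h : ‖w j - w i‖ ≤ ‖w j - wb‖ + ‖w i - wb‖ := by
      have : w j - w i = (w j - wb) - (w i - wb) := by abel
      rw [this]; exact norm_sub_le _ _
    nlinarith [norm_nonneg (w j - w i), norm_nonneg (w j - wb), norm_nonneg (w i - wb),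
      sq_nonneg (‖w j - wb‖ - ‖w i - wb‖), mul_le_mul h h (norm_nonneg _) (by positivity)]
  calc ∑ i, ‖(1 / (m : ℝ)) • ∑ j, gradient (F j) (w j) -
        (1 / (m : ℝ)) • ∑ j, gradient (F j) (w i)‖ ^ 2
      ≤ ∑ i, (L ^ 2 / m) * ∑ j, ‖w j - w i‖ ^ 2 := Finset.sum_le_sum fun i _ => key i
    _ ≤ ∑ i, (L ^ 2 / m) * ∑ j, (2 * ‖w j - wb‖ ^ 2 + 2 * ‖w i - wb‖ ^ 2) := by
        refine Finset.sum_le_sum fun i _ => mul_le_mul_of_nonneg_left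
          (Finset.sum_le_sum fun j _ => pair i j) (by positivity)
    _ = 4 * L ^ 2 * ∑ i, ‖w i - wb‖ ^ 2 := by
        set T := ∑ j, ‖w j - wb‖ ^ 2 with hT
        have step : ∀ i : Fin m, (L ^ 2 / m) * ∑ j, (2 * ‖w j - wb‖ ^ 2 + 2 * ‖w i - wb‖ ^ 2)
            = 2 * L ^ 2 / m * T + 2 * L ^ 2 * ‖w i - wb‖ ^ 2 := by
          intro i
          rw [Finset.sum_add_distrib, ← Finset.mul_sum, Finset.sum_const, card_univ]
          simp only [Fintype.card_fin, nsmul_eq_mul, ← hT]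
          field_simp
        rw [Finset.sum_congr rfl fun i _ => step i, Finset.sum_add_distrib,
          Finset.sum_const, ← Finset.mul_sum, card_univ]
        simp only [Fintype.card_fin, nsmul_eq_mul, ← hT]
        field_simp; ring
end
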